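/- arXiv:math/0207068 — 3 statements merged into one kernel-verified Lean document; each statement's English description precedes it below -/
import Mathlib

section
/- Let k be a field and s ≥ 3 an integer. Then the polynomial f = XY(Z+U) − U^s Z is a prime element of the polynomial ring k[X,Y,Z,U]. -/
/-!
Regarded as a polynomial in `X` over `k[Y,Z,U]`, the polynomial `XY(Z+U) − UˢZ` is linear
with coefficients `Y(Z+U)` and `UˢZ`. These are coprime, since `Y`, `Z`, `U` and `Z + U` are
pairwise non-associated primes, so the polynomial is a primitive linear polynomial over the
domain `k[Y,Z,U]`, hence irreducible, and therefore prime in the UFD `k[X,Y,Z,U]`.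
-/

open MvPolynomial

namespace MvPolynomial

section

variable {R σ : Type*} [CommRing R] [IsDomain R]

theorem isRelPrime_X_X {i j : σ} (h : i ≠ j) : IsRelPrime (X i : MvPolynomial σ R) (X j) :=
  X_prime.irreducible.isRelPrime_iff_not_dvd.mpr (by rwa [X_dvd_X])

theorem isRelPrime_X_mul_X_add_X_X_pow_mul_X [UniqueFactorizationMonoid R] (s : ℕ) :
    IsRelPrime (X 0 * (X 1 + X 2) : MvPolynomial (Fin 3) R) (X 2 ^ s * X 1) := by
  have h12 : IsRelPrime (X 1 + X 2 : MvPolynomial (Fin 3) R) (X 2) := by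
    simpa using
      (isRelPrime_X_X (R := R) (i := (1 : Fin 3)) (j := 2) (by decide)).add_mul_left_left 1
  have h21 : IsRelPrime (X 1 + X 2 : MvPolynomial (Fin 3) R) (X 1) := by
    simpa using
      (isRelPrime_X_X (R := R) (i := (2 : Fin 3)) (j := 1) (by decide)).mul_add_left_left 1
  exact .mul_left
    ((isRelPrime_X_X (by decide)).pow_right.mul_right (isRelPrime_X_X (by decide)))
    (h12.pow_right.mul_right h21)

end

theorem finSuccEquiv_satherPoly {R : Type*} [CommRing R] (s : ℕ) :
    finSuccEquiv R 3 (X 0 * X 1 * (X 2 + X 3) - X 3 ^ s * X 2) =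
      Polynomial.C (X 0 * (X 1 + X 2)) * Polynomial.X + Polynomial.C (-(X 2 ^ s * X 1)) := by
  have h1 : (1 : Fin 4) = Fin.succ 0 := rfl
  have h2 : (2 : Fin 4) = Fin.succ 1 := rfl
  have h3 : (3 : Fin 4) = Fin.succ 2 := rfl
  simp only [map_sub, map_mul, map_add, map_pow, map_neg, h1, h2, h3, finSuccEquiv_X_zero,
    finSuccEquiv_X_succ]
  ring

end MvPolynomial

theorem satherPoly_prime_general {k : Type*} [Field k] (s : ℕ) :
    Prime (X 0 * X 1 * (X 2 + X 3) - X 3 ^ s * X 2 : MvPolynomial (Fin 4) k) := by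
  rw [← MulEquiv.prime_iff (finSuccEquiv k 3).toMulEquiv]
  change Prime (finSuccEquiv k 3 _)
  rw [finSuccEquiv_satherPoly]
  have hlead : (X 0 * (X 1 + X 2) : MvPolynomial (Fin 3) k) ≠ 0 :=
    mul_ne_zero (X_ne_zero 0) fun h ↦ by simpa using congrArg (eval (Pi.single 1 1)) h
  exact UniqueFactorizationMonoid.irreducible_iff_prime.mp <|
    Polynomial.irreducible_C_mul_X_add_C hlead (isRelPrime_X_mul_X_add_X_X_pow_mul_X s).neg_right

/-- For a field `k` and `s ≥ 3`, the polynomial `XY(Z+U) − UˢZ` is a prime element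
of `k[X,Y,Z,U]`. -/
theorem satherPoly_prime {k : Type*} [Field k] (s : ℕ) (hs : 3 ≤ s) :
    Prime (X 0 * X 1 * (X 2 + X 3) - X 3 ^ s * X 2 : MvPolynomial (Fin 4) k) :=
  satherPoly_prime_general s
end

section
/- Let k be a field, s ≥ 3 an integer, and R = k[X,Y,Z,U]/(XY(Z+U) − U^s Z) = k[x,y,z,u]. Let 𝔭 = (x,u)R and 𝔮 = (y,z)R. Then for every integer m ≥ 1, the element x^m y lies in 𝔭^(ms) ∩ 𝔮. -/
open MvPolynomial

/-- The `m`-th symbolic power of an ideal `p` of a commutative ring `R`: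
`p^(m) = {f ∈ R : s·f ∈ p^m for some s ∈ R∖p}`. -/
def symbPow {R : Type*} [CommRing R] (p : Ideal R) (m : ℕ) : Set R :=
  {f : R | ∃ s ∉ p, s * f ∈ p ^ m}

/-- The polynomial `XY(Z+U) − UˢZ` in `k[X,Y,Z,U]`. -/
noncomputable def satherPoly (k : Type*) [Field k] (s : ℕ) : MvPolynomial (Fin 4) k :=
  X 0 * X 1 * (X 2 + X 3) - X 3 ^ s * X 2

/-- The ring `R = k[X,Y,Z,U]/(XY(Z+U) − UˢZ)`. -/
abbrev SatherRing (k : Type*) [Field k] (s : ℕ) : Type _ :=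
  MvPolynomial (Fin 4) k ⧸ Ideal.span {satherPoly k s}

/-- The image `x` of `X` in `R`. -/
noncomputable def sx (k : Type*) [Field k] (s : ℕ) : SatherRing k s :=
  Ideal.Quotient.mk _ (X 0)

/-- The image `y` of `Y` in `R`. -/
noncomputable def sy (k : Type*) [Field k] (s : ℕ) : SatherRing k s :=
  Ideal.Quotient.mk _ (X 1)

/-- The image `z` of `Z` in `R`. -/
noncomputable def sz (k : Type*) [Field k] (s : ℕ) : SatherRing k s :=
  Ideal.Quotient.mk _ (X 2)

/-- The image `u` of `U` in `R`. -/
noncomputable def su (k : Type*) [Field k] (s : ℕ) : SatherRing k s :=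
  Ideal.Quotient.mk _ (X 3)

set_option maxHeartbeats 1000000 in
set_option synthInstance.maxHeartbeats 400000 in
/-- In `R = k[X,Y,Z,U]/(XY(Z+U) − UˢZ)` with `s ≥ 3`, `𝔭 = (x,u)` and `𝔮 = (y,z)`,
for every `m ≥ 1` the element `xᵐy` lies in `𝔭^(ms) ∩ 𝔮`. -/
theorem satherRing_mem_symbPow {k : Type*} [Field k] (s : ℕ) (hs : 3 ≤ s)
    (m : ℕ) (hm : 1 ≤ m) :
    sx k s ^ m * sy k s ∈ symbPow (Ideal.span {sx k s, su k s}) (m * s) ∧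
    sx k s ^ m * sy k s ∈ Ideal.span {sy k s, sz k s} := by
  obtain ⟨n, rfl⟩ : ∃ n, m = n + 1 := ⟨m - 1, (Nat.succ_pred_eq_of_pos hm).symm⟩
  constructor
  · -- symbolic power part
    -- the relation in R
    have h : sx k s * sy k s * (sz k s + su k s) = su k s ^ s * sz k s := by
      simp only [sx, sy, sz, su, ← map_mul, ← map_add, ← map_pow]
      rw [Ideal.Quotient.eq]
      exact Ideal.subset_span rfl
    -- the witness t
    refine ⟨sy k s ^ n * (sz k s + su k s) ^ (n + 1), ?_, ?_⟩
    · -- t ∉ p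
      intro ht
      have hf : (aeval ![0, X 1, X 2, 0] : MvPolynomial (Fin 4) k →ₐ[k] MvPolynomial (Fin 4) k)
          (satherPoly k s) = 0 := by
        simp [satherPoly, zero_pow (by omega : s ≠ 0)]
      set f : MvPolynomial (Fin 4) k →ₐ[k] MvPolynomial (Fin 4) k := aeval ![0, X 1, X 2, 0]
      have hker : ∀ a ∈ Ideal.span {satherPoly k s}, f.toRingHom a = 0 := by
        intro a ha
        obtain ⟨c, rfl⟩ := Ideal.mem_span_singleton'.mp ha
        simp [hf]
      set φ : SatherRing k s →+* MvPolynomial (Fin 4) k :=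
        Ideal.Quotient.lift _ f.toRingHom hker
      have hφx : φ (sx k s) = 0 := by simp [φ, sx, f]
      have hφu : φ (su k s) = 0 := by simp [φ, su, f]
      have hφy : φ (sy k s) = X 1 := by simp [φ, sy, f]
      have hφz : φ (sz k s) = X 2 := by simp [φ, sz, f]
      have hzero : φ (sy k s ^ n * (sz k s + su k s) ^ (n + 1)) = 0 := by
        have hle : Ideal.span {sx k s, su k s} ≤ RingHom.ker φ := by
          rw [Ideal.span_le]
          rintro a (rfl | rfl) <;> simp [RingHom.mem_ker, hφx, hφu]
        exact hle ht
      rw [φ.map_mul, φ.map_pow, φ.map_pow, φ.map_add, hφy, hφz, hφu, add_zero] at hzero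
      exact (mul_ne_zero (pow_ne_zero _ (X_ne_zero _)) (pow_ne_zero _ (X_ne_zero _))) hzero
    · -- t * x^m y ∈ p^(ms)
      have key : sy k s ^ n * (sz k s + su k s) ^ (n + 1) * (sx k s ^ (n + 1) * sy k s)
          = su k s ^ ((n + 1) * s) * sz k s ^ (n + 1) := by
        calc sy k s ^ n * (sz k s + su k s) ^ (n + 1) * (sx k s ^ (n + 1) * sy k s)
            = (sx k s * sy k s) ^ (n + 1) * (sz k s + su k s) ^ (n + 1) := by
              rw [mul_pow]; ring
          _ = (sx k s * sy k s * (sz k s + su k s)) ^ (n + 1) := (mul_pow _ _ _).symm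
          _ = (su k s ^ s * sz k s) ^ (n + 1) := by rw [h]
          _ = su k s ^ ((n + 1) * s) * sz k s ^ (n + 1) := by
              rw [mul_pow, ← pow_mul, Nat.mul_comm]
      rw [key]
      exact Ideal.mul_mem_right _ _
        (Ideal.pow_mem_pow (Ideal.subset_span (by simp)) _)
  · exact Ideal.mul_mem_left _ _ (Ideal.subset_span (by simp))
end

section
/- Let k be a field, s ≥ 3 an integer, and R = k[X,Y,Z,U]/(XY(Z+U) − U^s Z) = k[x,y,z,u], with 𝔪 = (x,y,z,u)R. Let q ≥ 1 be an integer such that s−1 divides 2q, and set m = 2q/(s−1) + 1. Then (xy − u^s)^q · x^m y ∉ 𝔪^{ms+1}. -/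
open MvPolynomial

set_option synthInstance.maxHeartbeats 1000000 in
set_option maxHeartbeats 1000000 in
/-- In `R = k[X,Y,Z,U]/(XY(Z+U) − UˢZ)` with `s ≥ 3` and `𝔪 = (x,y,z,u)`: if `q ≥ 1`,
`s−1` divides `2q` and `m = 2q/(s−1) + 1`, then `(xy − uˢ)^q · xᵐy ∉ 𝔪^(ms+1)`. -/
theorem satherRing_not_mem_maximalIdeal_pow {k : Type*} [Field k] (s : ℕ) (hs : 3 ≤ s)
    (q : ℕ) (hq : 1 ≤ q) (hdvd : (s - 1) ∣ 2 * q) (m : ℕ) (hm : m = 2 * q / (s - 1) + 1) :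
    (sx k s * sy k s - su k s ^ s) ^ q * (sx k s ^ m * sy k s)
      ∉ Ideal.span {sx k s, sy k s, sz k s, su k s} ^ (m * s + 1) := by
  intro hmem
  set N := m * s + 1 with hN
  -- arithmetic: 2q + m + 1 < N
  obtain ⟨c, hc⟩ := hdvd
  have hs1 : 0 < s - 1 := by omega
  have hmc : m = c + 1 := by rw [hm, hc, Nat.mul_div_cancel_left _ hs1]
  have hlt : 2 * q + m + 1 < N := by
    obtain ⟨s', rfl⟩ : ∃ s', s = s' + 3 := ⟨s - 3, by omega⟩
    replace hc : 2 * q = (s' + 2) * c := by simpa using hc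
    subst hmc
    rw [hN, hc]
    nlinarith []
  -- target ring A = k[t]/(t^N)
  set I : Ideal (Polynomial k) := Ideal.span {(Polynomial.X : Polynomial k) ^ N} with hI
  set t : Polynomial k ⧸ I := Ideal.Quotient.mk I Polynomial.X with ht
  have htN : t ^ N = 0 := by
    rw [ht, ← map_pow, Ideal.Quotient.eq_zero_iff_mem]
    exact Ideal.subset_span rfl
  have hpow0 : ∀ a : ℕ, N ≤ a → t ^ a = 0 := by
    intro a ha
    rw [← Nat.add_sub_cancel' ha, pow_add, htN, zero_mul]
  have hnil : IsNilpotent (t ^ (s - 2)) :=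
    ⟨N, by rw [← pow_mul]; exact hpow0 _ (Nat.le_mul_of_pos_left N (by omega))⟩
  have hunit : IsUnit (1 - t ^ (s - 2)) := hnil.isUnit_one_sub
  obtain ⟨w, hw⟩ := hunit.exists_left_inv
  -- the homomorphism
  set v : Fin 4 → Polynomial k ⧸ I := ![t, t, -(t * w), t] with hv
  set φ : MvPolynomial (Fin 4) k →ₐ[k] (Polynomial k ⧸ I) := aeval v with hφ
  have hts : t ^ s = t ^ 2 * t ^ (s - 2) := by rw [← pow_add]; congr 1; omega
  have hφ0 : φ (satherPoly k s) = 0 := by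
    simp only [hφ, satherPoly, map_sub, map_mul, map_add, map_pow, aeval_X, hv,
      Matrix.cons_val_zero, Matrix.cons_val_one, Matrix.head_cons, Matrix.cons_val_two,
      Matrix.tail_cons, Matrix.cons_val_three, Matrix.head_fin_const]
    rw [hts]
    linear_combination (-(t * t * t)) * hw
  set ψ : SatherRing k s →+* (Polynomial k ⧸ I) :=
    Ideal.Quotient.lift (Ideal.span {satherPoly k s}) φ.toRingHom (by
      intro a ha
      rw [Ideal.mem_span_singleton] at ha
      obtain ⟨b, rfl⟩ := ha
      simp [map_mul, hφ0]) with hψ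
  have hψx : ψ (sx k s) = t := by
    simp [hψ, sx, Ideal.Quotient.lift_mk, hφ, hv]
  have hψy : ψ (sy k s) = t := by
    simp [hψ, sy, Ideal.Quotient.lift_mk, hφ, hv]
  have hψz : ψ (sz k s) = -(t * w) := by
    simp [hψ, sz, Ideal.Quotient.lift_mk, hφ, hv]
  have hψu : ψ (su k s) = t := by
    simp [hψ, su, Ideal.Quotient.lift_mk, hφ, hv]
  -- image of the maximal ideal
  have h2 : (Ideal.span {sx k s, sy k s, sz k s, su k s}).map ψ ≤ Ideal.span {t} := by
    rw [Ideal.map_span, Ideal.span_le]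
    rintro a ⟨b, hb, rfl⟩
    simp only [Set.mem_insert_iff, Set.mem_singleton_iff] at hb
    rcases hb with rfl | rfl | rfl | rfl
    · rw [hψx]; exact Ideal.subset_span rfl
    · rw [hψy]; exact Ideal.subset_span rfl
    · rw [hψz]
      exact Ideal.mem_span_singleton.mpr ⟨-w, by ring⟩
    · rw [hψu]; exact Ideal.subset_span rfl
  have h1 : ψ ((sx k s * sy k s - su k s ^ s) ^ q * (sx k s ^ m * sy k s))
      ∈ ((Ideal.span {sx k s, sy k s, sz k s, su k s}).map ψ) ^ N := by
    rw [← Ideal.map_pow]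
    exact Ideal.mem_map_of_mem ψ hmem
  have h3 : ψ ((sx k s * sy k s - su k s ^ s) ^ q * (sx k s ^ m * sy k s)) = 0 := by
    have := Ideal.pow_right_mono h2 N h1
    rw [Ideal.span_singleton_pow, htN, Ideal.mem_span_singleton] at this
    exact zero_dvd_iff.mp this
  rw [map_mul, map_pow, map_sub, map_mul, map_pow, map_mul, map_pow,
    hψx, hψy, hψu] at h3
  -- h3 : (t * t - t ^ s) ^ q * (t ^ m * t) = 0
  have hfac1 : t * t - t ^ s = t ^ 2 * (1 - t ^ (s - 2)) := by rw [hts]; ring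
  have hpowid : (t : Polynomial k ⧸ I) ^ (2 * q + m + 1) = (t ^ 2) ^ q * t ^ m * t := by
    rw [pow_succ, pow_add, pow_mul]
  have h4 : (1 - t ^ (s - 2)) ^ q * t ^ (2 * q + m + 1) = 0 := by
    calc (1 - t ^ (s - 2)) ^ q * t ^ (2 * q + m + 1)
        = (t ^ 2 * (1 - t ^ (s - 2))) ^ q * (t ^ m * t) := by rw [hpowid, mul_pow]; ring
      _ = (t * t - t ^ s) ^ q * (t ^ m * t) := by rw [← hfac1]
      _ = 0 := h3
  have h5 : t ^ (2 * q + m + 1) = 0 := ((hunit.pow q).mul_right_eq_zero).mp h4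
  -- contradiction
  rw [ht, ← map_pow, Ideal.Quotient.eq_zero_iff_mem, hI, Ideal.mem_span_singleton] at h5
  have h6 := Polynomial.natDegree_le_of_dvd h5 (pow_ne_zero _ Polynomial.X_ne_zero)
  simp only [Polynomial.natDegree_pow, Polynomial.natDegree_X, mul_one] at h6
  omega
end
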